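/- The iterates of Algorithm (DG) satisfy, for all k ≥ 0: (i) ‖x^k − x*‖ ≤ ‖x^0 − x*‖ for every x* ∈ X*; (ii) the ascent property d(x^{k+1}) ≥ d(x^k) + (L_d/2)·‖x^{k+1} − x^k‖²; and (iii) ‖x^{k+1}‖² ≤ ‖x^k‖² + 2 α_k (f* − f(u^k)). -/

import Mathlib

/-!
Strong convexity of `f` makes the dual function `d` concave and `L_d`-smooth with gradient
`-G u(x) - g`: minimality of `u(y)` gives `d y ≤ d x + ⟪y - x, ∇d x⟫`, while quadratic growth of
the Lagrangian around its minimiser `u(x)` and Cauchy–Schwarz give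
`d x + ⟪y - x, ∇d x⟫ - L_d / 2 * ‖y - x‖ ^ 2 ≤ d y`. Everything else is the variational
inequality of the projection onto `K*`: tested at `x^k` it gives the ascent, tested at a dual
optimum (using weak duality `d ≤ f*` on `K*`) the Fejér monotonicity, and since `K*` is a cone
the residual of the projection is orthogonal to it, which gives the bound on `‖x^{k+1}‖`.
-/

open Filter Topology
open scoped RealInnerProductSpace

theorem StrongConvexOn.add_sq_norm_sub_le_of_isMinOn {E : Type*} [NormedAddCommGroup E]
    [NormedSpace ℝ E] {s : Set E} {m : ℝ} {f : E → ℝ} {a u : E} (hf : StrongConvexOn s m f)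
    (ha : a ∈ s) (hmin : IsMinOn f s a) (hu : u ∈ s) :
    f a + m / 2 * ‖u - a‖ ^ 2 ≤ f u := by
  set c := m / 2 * ‖u - a‖ ^ 2
  have hsegment : ∀ t ∈ Set.Ioo (0 : ℝ) 1, f a + (1 - t) * c ≤ f u := by
    rintro t ⟨ht0, ht1⟩
    have hmem := hf.1 hu ha ht0.le (sub_nonneg.2 ht1.le) (add_sub_cancel t 1)
    have hconv := hf.2 hu ha ht0.le (sub_nonneg.2 ht1.le) (add_sub_cancel t 1)
    have hle := isMinOn_iff.1 hmin _ hmem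
    rw [smul_eq_mul, smul_eq_mul] at hconv
    refine le_of_mul_le_mul_left ?_ ht0
    linear_combination hle + hconv
  have hlim : Tendsto (fun t : ℝ => f a + (1 - t) * c) (𝓝[>] 0) (𝓝 (f a + c)) := by
    have : Continuous (fun t : ℝ => f a + (1 - t) * c) := by fun_prop
    simpa using (this.tendsto 0).mono_left nhdsWithin_le_nhds
  exact le_of_tendsto hlim (eventually_of_mem (Ioo_mem_nhdsGT one_pos) hsegment)

theorem StrongConvexOn.add_convexOn {E : Type*} [NormedAddCommGroup E]
    [NormedSpace ℝ E] {s : Set E} {m : ℝ} {f g : E → ℝ} (hf : StrongConvexOn s m f)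
    (hg : ConvexOn ℝ s g) : StrongConvexOn s m (f + g) := by
  simpa [StrongConvexOn] using hf.add hg.uniformConvexOn_zero

theorem real_inner_sub_le_zero_of_forall_norm_sub_le {F : Type*} [NormedAddCommGroup F]
    [InnerProductSpace ℝ F] {S : Set F} (hS : Convex ℝ S) {z P : F} (hP : P ∈ S)
    (hmin : ∀ w ∈ S, ‖z - P‖ ≤ ‖z - w‖) : ∀ w ∈ S, ⟪z - P, w - P⟫ ≤ 0 := by
  refine (norm_eq_iInf_iff_real_inner_le_zero hS hP).1 (le_antisymm ?_ ?_)
  · have : Nonempty S := ⟨⟨P, hP⟩⟩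
    exact le_ciInf fun w => hmin w w.2
  · exact ciInf_le ⟨0, by rintro _ ⟨w, rfl⟩; positivity⟩ (⟨P, hP⟩ : S)

section ProjectedStep

variable {F : Type*} [NormedAddCommGroup F] [InnerProductSpace ℝ F] {S : Set F} {x s P : F}
  {α L : ℝ}

theorem norm_sub_sq_le_mul_inner_of_proj (hproj : ∀ w ∈ S, ⟪x + α • s - P, w - P⟫ ≤ 0)
    (hx : x ∈ S) : ‖P - x‖ ^ 2 ≤ α * ⟪s, P - x⟫ := by
  have h := hproj x hx
  rw [show x + α • s - P = -(P - x) + α • s by abel, show x - P = -(P - x) by abel,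
    inner_add_left, inner_neg_neg, real_inner_self_eq_norm_sq, inner_neg_right,
    real_inner_smul_left] at h
  linarith

theorem mul_norm_sub_sq_le_inner_of_proj (hproj : ∀ w ∈ S, ⟪x + α • s - P, w - P⟫ ≤ 0)
    (hx : x ∈ S) (hα : 0 ≤ α) (hαL : α * L ≤ 1) : L * ‖P - x‖ ^ 2 ≤ ⟪s, P - x⟫ := by
  have h := norm_sub_sq_le_mul_inner_of_proj hproj hx
  rcases hα.eq_or_lt with rfl | hα
  · have : P - x = 0 := by simpa using h
    simp [this]
  · refine le_of_mul_le_mul_left ?_ hα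
    nlinarith [sq_nonneg ‖P - x‖]

theorem norm_sub_le_of_proj (hproj : ∀ w ∈ S, ⟪x + α • s - P, w - P⟫ ≤ 0) {w : F} (hw : w ∈ S)
    (hα : 0 ≤ α) (hαL : α * L ≤ 1) (hs : ⟪s, P - w⟫ ≤ L / 2 * ‖P - x‖ ^ 2) :
    ‖P - w‖ ≤ ‖x - w‖ := by
  have h := hproj w hw
  rw [show x + α • s - P = (x - P) + α • s by abel, show w - P = -(P - w) by abel,
    inner_add_left, inner_neg_right, inner_neg_right, real_inner_smul_left] at h
  have hsplit : ‖x - w‖ ^ 2 = ‖x - P‖ ^ 2 + 2 * ⟪x - P, P - w⟫ + ‖P - w‖ ^ 2 := by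
    rw [← norm_add_sq_real, sub_add_sub_cancel]
  rw [norm_sub_rev x P] at hsplit
  have : α * ⟪s, P - w⟫ ≤ α * (L / 2 * ‖P - x‖ ^ 2) := mul_le_mul_of_nonneg_left hs hα
  refine (pow_le_pow_iff_left₀ (norm_nonneg _) (norm_nonneg _) two_ne_zero).1 ?_
  nlinarith [sq_nonneg ‖P - x‖]

theorem PointedCone.real_inner_sub_proj_self_eq_zero {C : PointedCone ℝ F} {z P : F}
    (hP : P ∈ C) (hproj : ∀ w ∈ C, ⟪z - P, w - P⟫ ≤ 0) : ⟪z - P, P⟫ = 0 := by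
  have h0 := hproj 0 C.zero_mem
  have h2 := hproj ((2 : ℝ) • P) (C.smul_mem zero_le_two hP)
  rw [zero_sub, inner_neg_right] at h0
  rw [two_smul, add_sub_cancel_right] at h2
  linarith

theorem PointedCone.norm_sq_proj_eq {C : PointedCone ℝ F} (hP : P ∈ C)
    (hproj : ∀ w ∈ C, ⟪x + α • s - P, w - P⟫ ≤ 0) :
    ‖P‖ ^ 2 = ‖x‖ ^ 2 + 2 * α * ⟪s, P⟫ - ‖P - x‖ ^ 2 := by
  have h := C.real_inner_sub_proj_self_eq_zero hP hproj
  rw [show x + α • s - P = x - P + α • s by abel, inner_add_left, inner_sub_left,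
    real_inner_smul_left, real_inner_self_eq_norm_sq] at h
  rw [norm_sub_sq_real]
  linarith [real_inner_comm x P]

end ProjectedStep

section LagrangianDual

variable {E F : Type*} [NormedAddCommGroup E] [InnerProductSpace ℝ E] [NormedAddCommGroup F]
  [InnerProductSpace ℝ F]

def lagrangian (f : E → ℝ) (G : E →L[ℝ] F) (g : F) (v : E) (x : F) : ℝ :=
  f v + ⟪x, -(G v) - g⟫

def dualFn (f : E → ℝ) (G : E →L[ℝ] F) (g : F) (u : F → E) (x : F) : ℝ :=
  lagrangian f G g (u x) x

def IsLagrangianMinimizer (f : E → ℝ) (G : E →L[ℝ] F) (g : F) (U : Set E) (u : F → E) : Prop :=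
  ∀ x, u x ∈ U ∧ IsMinOn (lagrangian f G g · x) U (u x)

variable {f : E → ℝ} {G : E →L[ℝ] F} {g : F} {U : Set E} {u : F → E}

theorem lagrangian_eq_add_inner_sub (v : E) (x y : F) :
    lagrangian f G g v y = lagrangian f G g v x + ⟪y - x, -(G v) - g⟫ := by
  simp only [lagrangian, inner_sub_left]
  ring

theorem strongConvexOn_lagrangian {σ : ℝ} (hf : StrongConvexOn U σ f) (x : F) :
    StrongConvexOn U σ (lagrangian f G g · x) := by
  have haffine : ConvexOn ℝ U fun v => ⟪x, -(G v) - g⟫ := by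
    refine ⟨hf.1, fun a _ b _ μ ν _ _ hμν => le_of_eq ?_⟩
    simp only [map_add, map_smul, smul_eq_mul, inner_sub_right, inner_add_right, inner_neg_right,
      real_inner_smul_right]
    linear_combination ⟪x, g⟫ * hμν
  exact hf.add_convexOn haffine

theorem lagrangian_add_sq_norm_sub_le {σ : ℝ} (hf : StrongConvexOn U σ f)
    (hu : IsLagrangianMinimizer f G g U u) (x : F) {v : E} (hv : v ∈ U) :
    dualFn f G g u x + σ / 2 * ‖v - u x‖ ^ 2 ≤ lagrangian f G g v x :=
  (strongConvexOn_lagrangian hf x).add_sq_norm_sub_le_of_isMinOn (hu x).1 (hu x).2 hv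

theorem dualFn_le_add_inner (hu : IsLagrangianMinimizer f G g U u) (x y : F) :
    dualFn f G g u y ≤ dualFn f G g u x + ⟪y - x, -(G (u x)) - g⟫ := by
  rw [dualFn, dualFn, ← lagrangian_eq_add_inner_sub]
  exact (hu y).2 (hu x).1

theorem dualFn_le_of_mem_dual (hu : IsLagrangianMinimizer f G g U u) {K : Set F} {x : F}
    (hx : x ∈ PointedCone.dual (innerₗ F) K) {v : E} (hv : v ∈ U) (hvK : G v + g ∈ K) :
    dualFn f G g u x ≤ f v := by
  calc dualFn f G g u x ≤ lagrangian f G g v x := (hu x).2 hv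
    _ = f v - ⟪G v + g, x⟫ := by
      rw [lagrangian, show -(G v) - g = -(G v + g) by abel, inner_neg_right, real_inner_comm]
      ring
    _ ≤ f v := sub_le_self _ (PointedCone.mem_dual.1 hx hvK)

theorem add_inner_sub_sq_le_dualFn {σ : ℝ} (hσ : 0 < σ) (hf : StrongConvexOn U σ f)
    (hu : IsLagrangianMinimizer f G g U u) (x y : F) :
    dualFn f G g u x + ⟪y - x, -(G (u x)) - g⟫ - ‖G‖ ^ 2 / σ / 2 * ‖y - x‖ ^ 2 ≤
      dualFn f G g u y := by
  set δ := ‖u y - u x‖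
  have hgrowth := lagrangian_add_sq_norm_sub_le hf hu x (hu y).1
  have hshift : dualFn f G g u y = lagrangian f G g (u y) x + ⟪y - x, -(G (u x)) - g⟫ +
      ⟪y - x, G (u x - u y)⟫ := by
    rw [dualFn, lagrangian_eq_add_inner_sub _ x y, map_sub, add_assoc, ← inner_add_right]
    congr 2
    abel
  have hcs : -(‖y - x‖ * (‖G‖ * δ)) ≤ ⟪y - x, G (u x - u y)⟫ := by
    have hG : ‖G (u x - u y)‖ ≤ ‖G‖ * δ := (G.le_opNorm _).trans_eq (by rw [norm_sub_rev])
    exact neg_le_of_abs_le ((abs_real_inner_le_norm _ _).trans (by gcongr))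
  have hsquare : σ / 2 * δ ^ 2 - ‖y - x‖ * (‖G‖ * δ) + ‖G‖ ^ 2 / σ / 2 * ‖y - x‖ ^ 2 =
      (σ * δ - ‖G‖ * ‖y - x‖) ^ 2 / (2 * σ) := by
    field_simp
    ring
  have : 0 ≤ (σ * δ - ‖G‖ * ‖y - x‖) ^ 2 / (2 * σ) := by positivity
  linarith

theorem dualFn_add_le_of_proj {σ α : ℝ} (hσ : 0 < σ) (hf : StrongConvexOn U σ f)
    (hu : IsLagrangianMinimizer f G g U u)
    {S : Set F} {x P : F} (hproj : ∀ w ∈ S, ⟪x + α • (-(G (u x)) - g) - P, w - P⟫ ≤ 0)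
    (hx : x ∈ S) (hα : 0 ≤ α) (hαL : α * (‖G‖ ^ 2 / σ) ≤ 1) :
    dualFn f G g u x + ‖G‖ ^ 2 / σ / 2 * ‖P - x‖ ^ 2 ≤ dualFn f G g u P := by
  have hdescent := add_inner_sub_sq_le_dualFn hσ hf hu x P
  have hstep := mul_norm_sub_sq_le_inner_of_proj hproj hx hα hαL
  rw [real_inner_comm] at hdescent
  linarith

theorem norm_sub_le_of_proj_of_dualFn_le {σ α : ℝ} (hσ : 0 < σ) (hf : StrongConvexOn U σ f)
    (hu : IsLagrangianMinimizer f G g U u)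
    {S : Set F} {x P xs : F} (hproj : ∀ w ∈ S, ⟪x + α • (-(G (u x)) - g) - P, w - P⟫ ≤ 0)
    (hxs : xs ∈ S) (hα : 0 ≤ α) (hαL : α * (‖G‖ ^ 2 / σ) ≤ 1)
    (hP : dualFn f G g u P ≤ dualFn f G g u xs) : ‖P - xs‖ ≤ ‖x - xs‖ := by
  refine norm_sub_le_of_proj hproj hxs hα hαL ?_
  have hdescent := add_inner_sub_sq_le_dualFn hσ hf hu x P
  have hsupergrad := dualFn_le_add_inner hu x xs
  rw [show P - xs = (P - x) - (xs - x) by abel, inner_sub_right, real_inner_comm,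
    real_inner_comm (xs - x)]
  linarith

theorem norm_sq_le_of_proj {σ α : ℝ} (hσ : 0 < σ) (hf : StrongConvexOn U σ f)
    (hu : IsLagrangianMinimizer f G g U u)
    {K : Set F} {x P : F} (hP : P ∈ PointedCone.dual (innerₗ F) K)
    (hproj : ∀ w ∈ PointedCone.dual (innerₗ F) K, ⟪x + α • (-(G (u x)) - g) - P, w - P⟫ ≤ 0)
    (hα : 0 ≤ α) (hαL : α * (‖G‖ ^ 2 / σ) ≤ 1) {v : E} (hv : v ∈ U) (hvK : G v + g ∈ K) :
    ‖P‖ ^ 2 ≤ ‖x‖ ^ 2 + 2 * α * (f v - f (u x)) := by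
  have hdescent := add_inner_sub_sq_le_dualFn hσ hf hu x P
  have hweak := dualFn_le_of_mem_dual hu hP hv hvK
  have hgap : ⟪-(G (u x)) - g, P⟫ - ‖G‖ ^ 2 / σ / 2 * ‖P - x‖ ^ 2 ≤ f v - f (u x) := by
    rw [dualFn, lagrangian, inner_sub_left] at hdescent
    linarith [real_inner_comm P (-(G (u x)) - g)]
  have hbound := mul_le_mul_of_nonneg_left hgap hα
  rw [PointedCone.norm_sq_proj_eq hP hproj]
  nlinarith [sq_nonneg ‖P - x‖]

end LagrangianDual

theorem stmt_4_general {n p : ℕ}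
    (f : EuclideanSpace ℝ (Fin n) → ℝ) (σf : ℝ) (hσf : 0 < σf)
    (hfsc : StrongConvexOn Set.univ σf f)
    (U : Set (EuclideanSpace ℝ (Fin n))) (hUcv : Convex ℝ U)
    (G : EuclideanSpace ℝ (Fin n) →L[ℝ] EuclideanSpace ℝ (Fin p)) (g : EuclideanSpace ℝ (Fin p))
    (K : Set (EuclideanSpace ℝ (Fin p)))
    (Kstar : Set (EuclideanSpace ℝ (Fin p)))
    (hKstar : Kstar = {x : EuclideanSpace ℝ (Fin p) | ∀ v ∈ K, 0 ≤ ⟪x, v⟫})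
    (Lag : EuclideanSpace ℝ (Fin n) → EuclideanSpace ℝ (Fin p) → ℝ)
    (hLag : ∀ u x, Lag u x = f u + ⟪x, -(G u) - g⟫)
    (uu : EuclideanSpace ℝ (Fin p) → EuclideanSpace ℝ (Fin n))
    (huu : ∀ x : EuclideanSpace ℝ (Fin p), uu x ∈ U ∧ ∀ u ∈ U, Lag (uu x) x ≤ Lag u x)
    (d : EuclideanSpace ℝ (Fin p) → ℝ) (hd : ∀ x, d x = Lag (uu x) x)
    (ustar : EuclideanSpace ℝ (Fin n))
    (hustar : ustar ∈ U ∧ G ustar + g ∈ K ∧ ∀ u ∈ U, G u + g ∈ K → f ustar ≤ f u)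
    (fstar : ℝ) (hfstar : fstar = f ustar)
    (Xstar : Set (EuclideanSpace ℝ (Fin p))) (hXstar : Xstar = {x ∈ Kstar | d x = fstar})
    (Ld : ℝ) (hLd : Ld = ‖G‖ ^ 2 / σf)
    (projKs : EuclideanSpace ℝ (Fin p) → EuclideanSpace ℝ (Fin p))
    (hprojKs : ∀ z : EuclideanSpace ℝ (Fin p), projKs z ∈ Kstar ∧ ∀ w ∈ Kstar, ‖z - projKs z‖ ≤ ‖z - w‖)
    (LG : ℝ) (hLG : Ld ≤ LG) (α : ℕ → ℝ)
    (hα : ∀ k, 1 / LG ≤ α k ∧ α k ≤ 1 / Ld)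
    (x : ℕ → EuclideanSpace ℝ (Fin p)) (hx0K : x 0 ∈ Kstar)
    (hxrec : ∀ k, x (k + 1) = projKs (x k + α k • (-(G (uu (x k))) - g)))
 :
    (∀ k : ℕ, ∀ xs ∈ Xstar, ‖x k - xs‖ ≤ ‖x 0 - xs‖) ∧
    (∀ k : ℕ, d (x (k + 1)) ≥ d (x k) + Ld / 2 * ‖x (k + 1) - x k‖ ^ 2) ∧
    (∀ k : ℕ, ‖x (k + 1)‖ ^ 2 ≤ ‖x k‖ ^ 2 + 2 * α k * (fstar - f (uu (x k)))) := by
  obtain rfl : Kstar = PointedCone.dual (innerₗ _) K := by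
    ext y
    simp [hKstar, real_inner_comm]
  obtain rfl : Lag = lagrangian f G g := funext₂ hLag
  obtain rfl : d = dualFn f G g uu := funext hd
  have hu : IsLagrangianMinimizer f G g U uu := fun y => ⟨(huu y).1, isMinOn_iff.2 (huu y).2⟩
  subst hfstar hXstar hLd
  have hf : StrongConvexOn U σf f :=
    ⟨hUcv, fun a _ b _ => hfsc.2 (Set.mem_univ a) (Set.mem_univ b)⟩
  have hLG0 : 0 ≤ LG := (by positivity : (0 : ℝ) ≤ ‖G‖ ^ 2 / σf).trans hLG
  have hα0 (k : ℕ) : 0 ≤ α k := (one_div_nonneg.2 hLG0).trans (hα k).1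
  have hαL (k : ℕ) : α k * (‖G‖ ^ 2 / σf) ≤ 1 :=
    mul_le_of_le_div₀ zero_le_one (by positivity) (hα k).2
  have hxK (k : ℕ) : x k ∈ PointedCone.dual (innerₗ _) K := by
    cases k with
    | zero => exact hx0K
    | succ k => exact hxrec k ▸ (hprojKs _).1
  have hproj (k : ℕ) : ∀ w ∈ PointedCone.dual (innerₗ _) K,
      ⟪x k + α k • (-(G (uu (x k))) - g) - x (k + 1), w - x (k + 1)⟫ ≤ 0 :=
    hxrec k ▸ real_inner_sub_le_zero_of_forall_norm_sub_le (PointedCone.convex _) (hprojKs _).1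
      (hprojKs _).2
  refine ⟨fun k xs hxs => ?_,
    fun k => dualFn_add_le_of_proj hσf hf hu (hproj k) (hxK k) (hα0 k) (hαL k),
    fun k => norm_sq_le_of_proj hσf hf hu (hxK (k + 1)) (hproj k) (hα0 k) (hαL k) hustar.1
      hustar.2.1⟩
  obtain ⟨hxsK, hdxs⟩ := hxs
  induction k with
  | zero => exact le_rfl
  | succ k ih =>
    refine (norm_sub_le_of_proj_of_dualFn_le hσf hf hu (hproj k) hxsK (hα0 k) (hαL k) ?_).trans ih
    exact hdxs ▸ dualFn_le_of_mem_dual hu (hxK (k + 1)) hustar.1 hustar.2.1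

theorem stmt_4 {n p : ℕ}
    (f : EuclideanSpace ℝ (Fin n) → ℝ) (σf : ℝ) (hσf : 0 < σf)
    (hfc : Continuous f) (hfsc : StrongConvexOn Set.univ σf f)
    (U : Set (EuclideanSpace ℝ (Fin n))) (hUne : U.Nonempty) (hUcl : IsClosed U) (hUcv : Convex ℝ U)
    (G : EuclideanSpace ℝ (Fin n) →L[ℝ] EuclideanSpace ℝ (Fin p)) (hG : G ≠ 0) (g : EuclideanSpace ℝ (Fin p))
    (K : Set (EuclideanSpace ℝ (Fin p))) (hKne : K.Nonempty) (hKcl : IsClosed K) (hKcv : Convex ℝ K)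
    (hKcone : ∀ c : ℝ, 0 ≤ c → ∀ v ∈ K, c • v ∈ K)
    (Kstar : Set (EuclideanSpace ℝ (Fin p)))
    (hKstar : Kstar = {x : EuclideanSpace ℝ (Fin p) | ∀ v ∈ K, 0 ≤ ⟪x, v⟫})
    (Lag : EuclideanSpace ℝ (Fin n) → EuclideanSpace ℝ (Fin p) → ℝ)
    (hLag : ∀ u x, Lag u x = f u + ⟪x, -(G u) - g⟫)
    (uu : EuclideanSpace ℝ (Fin p) → EuclideanSpace ℝ (Fin n))
    (huu : ∀ x : EuclideanSpace ℝ (Fin p), uu x ∈ U ∧ ∀ u ∈ U, Lag (uu x) x ≤ Lag u x)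
    (d : EuclideanSpace ℝ (Fin p) → ℝ) (hd : ∀ x, d x = Lag (uu x) x)
    (ustar : EuclideanSpace ℝ (Fin n))
    (hustar : ustar ∈ U ∧ G ustar + g ∈ K ∧ ∀ u ∈ U, G u + g ∈ K → f ustar ≤ f u)
    (fstar : ℝ) (hfstar : fstar = f ustar)
    (Xstar : Set (EuclideanSpace ℝ (Fin p))) (hXstar : Xstar = {x ∈ Kstar | d x = fstar})
    (hXne : Xstar.Nonempty)
    (Ld : ℝ) (hLd : Ld = ‖G‖ ^ 2 / σf)
    (projKs : EuclideanSpace ℝ (Fin p) → EuclideanSpace ℝ (Fin p))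
    (hprojKs : ∀ z : EuclideanSpace ℝ (Fin p), projKs z ∈ Kstar ∧ ∀ w ∈ Kstar, ‖z - projKs z‖ ≤ ‖z - w‖)
    (LG : ℝ) (hLG : Ld ≤ LG) (α : ℕ → ℝ)
    (hα : ∀ k, 1 / LG ≤ α k ∧ α k ≤ 1 / Ld)
    (x : ℕ → EuclideanSpace ℝ (Fin p)) (hx0K : x 0 ∈ Kstar)
    (hxrec : ∀ k, x (k + 1) = projKs (x k + α k • (-(G (uu (x k))) - g)))
 :
    (∀ k : ℕ, ∀ xs ∈ Xstar, ‖x k - xs‖ ≤ ‖x 0 - xs‖) ∧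
    (∀ k : ℕ, d (x (k + 1)) ≥ d (x k) + Ld / 2 * ‖x (k + 1) - x k‖ ^ 2) ∧
    (∀ k : ℕ, ‖x (k + 1)‖ ^ 2 ≤ ‖x k‖ ^ 2 + 2 * α k * (fstar - f (uu (x k)))) :=
  stmt_4_general f σf hσf hfsc U hUcv G g K Kstar hKstar Lag hLag uu huu d hd ustar hustar fstar
    hfstar Xstar hXstar Ld hLd projKs hprojKs LG hLG α hα x hx0K hxrec
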